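/- Let γ > 0 and a > 0 be real and let ℓ ∈ ℂ satisfy Re ℓ ≥ 0. Then lim_{s → 0⁺} s · ∫_ℝ e^{sc} exp(−a e^{γc} − ℓ e^{γc/2}) dc = 1. -/

import Mathlib

open MeasureTheory Filter Topology Set

/-!
Substituting `u = s c` turns `s ∫ e^{sc} w(c) dc` into `∫ e^u w(u/s) du`, where `w` is `zeroModeWeight`. As `s → 0⁺`, `w(u/s) → 1`
for `u < 0`, because `w → 1` at `-∞`, and `w(u/s) → 0` for `u > 0`, because `|w(c)| ≤ e^{-aγc}`
for `c ≥ 0`. The same bound shows that `e^u w(u/s)` is dominated by `e^{-|u|}` once `2s ≤ aγ`, so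
dominated convergence gives the limit `∫_{-∞}^0 e^u du = 1`.
-/

theorem integral_indicator_Iic_cexp :
    ∫ u : ℝ, (Iic 0).indicator (fun u : ℝ => Complex.exp u) u = 1 := by
  rw [integral_indicator measurableSet_Iic]
  simp_rw [← Complex.ofReal_exp]
  rw [integral_complex_ofReal, integral_exp_Iic, Real.exp_zero, Complex.ofReal_one]

theorem mul_integral_cexp_mul_eq (f : ℝ → ℂ) {s : ℝ} (hs : 0 < s) :
    (s : ℂ) * ∫ c : ℝ, Complex.exp (s * c) * f c
      = ∫ u : ℝ, Complex.exp u * f (u / s) := by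
  have h := Measure.integral_comp_mul_left (fun u : ℝ => Complex.exp u * f (u / s)) s
  simp only [Complex.ofReal_mul, mul_div_cancel_left₀ _ hs.ne', abs_of_pos (inv_pos.mpr hs)] at h
  rw [h, ← Complex.real_smul, smul_smul, mul_inv_cancel₀ hs.ne', one_smul]

theorem integrable_exp_neg_abs : Integrable fun u : ℝ => Real.exp (-|u|) := by
  have hle : IntegrableOn (fun u : ℝ => Real.exp (-|u|)) (Iic 0) :=
    (integrableOn_exp_Iic 0).congr_fun
      (fun u hu => by rw [abs_of_nonpos (mem_Iic.mp hu), neg_neg]) measurableSet_Iic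
  have hgt : IntegrableOn (fun u : ℝ => Real.exp (-|u|)) (Ioi 0) :=
    (exp_neg_integrableOn_Ioi 0 one_pos).congr_fun
      (fun u hu => by simp only [abs_of_pos (mem_Ioi.mp hu), neg_one_mul]) measurableSet_Ioi
  simpa [Iic_union_Ioi] using hle.union hgt

section AbelianLimit

variable {f : ℝ → ℂ} {C κ : ℝ}

theorem norm_cexp_mul_comp_div_le (hbdd : ∀ c, ‖f c‖ ≤ C)
    (hdecay : ∀ c, 0 ≤ c → ‖f c‖ ≤ C * Real.exp (-(κ * c)))
    {s : ℝ} (hs : 0 < s) (hsκ : 2 * s ≤ κ) (u : ℝ) :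
    ‖Complex.exp u * f (u / s)‖ ≤ C * Real.exp (-|u|) := by
  rw [norm_mul, Complex.norm_exp_ofReal]
  rcases le_or_gt u 0 with hu | hu
  · calc Real.exp u * ‖f (u / s)‖ ≤ Real.exp u * C := by gcongr; exact hbdd _
      _ = C * Real.exp (-|u|) := by rw [abs_of_nonpos hu, neg_neg, mul_comm]
  · have hscaled : 2 * u ≤ κ * (u / s) := by
      rw [mul_div_assoc', le_div_iff₀ hs]; nlinarith
    calc Real.exp u * ‖f (u / s)‖ ≤ Real.exp u * (C * Real.exp (-(κ * (u / s)))) := by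
          gcongr; exact hdecay _ (by positivity)
      _ ≤ Real.exp u * (C * Real.exp (-(2 * u))) := by
          have hC : 0 ≤ C := (norm_nonneg _).trans (hbdd 0)
          gcongr
      _ = C * Real.exp (-|u|) := by
          rw [abs_of_pos hu, mul_left_comm, ← Real.exp_add]; ring_nf

theorem tendsto_cexp_mul_comp_div (hκ : 0 < κ)
    (hdecay : ∀ c, 0 ≤ c → ‖f c‖ ≤ C * Real.exp (-(κ * c)))
    (hlim : Tendsto f atBot (𝓝 1)) {u : ℝ} (hu : u ≠ 0) :
    Tendsto (fun s : ℝ => Complex.exp u * f (u / s)) (𝓝[>] 0)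
      (𝓝 ((Iic 0).indicator (fun u : ℝ => Complex.exp u) u)) := by
  rcases hu.lt_or_gt with hu | hu
  · rw [indicator_of_mem (mem_Iic.mpr hu.le)]
    have hbot : Tendsto (fun s : ℝ => u / s) (𝓝[>] 0) atBot := by
      simp only [div_eq_mul_inv]
      exact (tendsto_const_mul_atBot_of_neg hu).mpr tendsto_inv_nhdsGT_zero
    simpa using (hlim.comp hbot).const_mul (Complex.exp u)
  · rw [indicator_of_notMem (by simpa using hu), tendsto_zero_iff_norm_tendsto_zero]
    have htop : Tendsto (fun s : ℝ => κ * (u / s)) (𝓝[>] 0) atTop := by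
      simp only [div_eq_mul_inv]
      exact (tendsto_inv_nhdsGT_zero.const_mul_atTop hu).const_mul_atTop hκ
    have hbound : Tendsto (fun s : ℝ => Real.exp u * (C * Real.exp (-(κ * (u / s)))))
        (𝓝[>] 0) (𝓝 0) := by
      simpa using ((Real.tendsto_exp_atBot.comp (tendsto_neg_atTop_atBot.comp htop)).const_mul
        C).const_mul (Real.exp u)
    refine squeeze_zero_norm' ?_ hbound
    filter_upwards [self_mem_nhdsWithin] with s hs
    rw [norm_norm, norm_mul, Complex.norm_exp_ofReal]
    gcongr
    exact hdecay _ (div_pos hu hs).le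

theorem tendsto_mul_integral_cexp_mul (hf : Continuous f) (hbdd : ∀ c, ‖f c‖ ≤ C)
    (hκ : 0 < κ) (hdecay : ∀ c, 0 ≤ c → ‖f c‖ ≤ C * Real.exp (-(κ * c)))
    (hlim : Tendsto f atBot (𝓝 1)) :
    Tendsto (fun s : ℝ => (s : ℂ) * ∫ c : ℝ, Complex.exp (s * c) * f c) (𝓝[>] 0) (𝓝 1) := by
  have hsmall : ∀ᶠ s in 𝓝[>] (0 : ℝ), 0 < s ∧ 2 * s ≤ κ := by
    filter_upwards [Ioc_mem_nhdsGT (half_pos hκ)] with s hs using ⟨hs.1, by linarith [hs.2]⟩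
  have hconv := tendsto_integral_filter_of_dominated_convergence
    (fun u => C * Real.exp (-|u|))
    (Eventually.of_forall fun s => by fun_prop)
    (hsmall.mono fun s hs => Eventually.of_forall (norm_cexp_mul_comp_div_le hbdd hdecay hs.1 hs.2))
    (integrable_exp_neg_abs.const_mul C)
    ((Measure.ae_ne volume 0).mono fun u hu => tendsto_cexp_mul_comp_div hκ hdecay hlim hu)
  rw [integral_indicator_Iic_cexp] at hconv
  refine hconv.congr' (hsmall.mono fun s hs => ?_)
  exact (mul_integral_cexp_mul_eq f hs.1).symm

end AbelianLimit

noncomputable def zeroModeWeight (γ a : ℝ) (ℓ : ℂ) (c : ℝ) : ℂ :=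
  Complex.exp (-(a * Real.exp (γ * c)) - ℓ * Real.exp (γ * c / 2))

section ZeroModeWeight

variable {γ a : ℝ} {ℓ : ℂ}

theorem continuous_zeroModeWeight : Continuous (zeroModeWeight γ a ℓ) := by
  unfold zeroModeWeight; fun_prop

theorem norm_zeroModeWeight_le (hℓ : 0 ≤ ℓ.re) (c : ℝ) :
    ‖zeroModeWeight γ a ℓ c‖ ≤ Real.exp (-(a * Real.exp (γ * c))) := by
  rw [zeroModeWeight, Complex.norm_exp, Real.exp_le_exp]
  simp only [Complex.sub_re, Complex.neg_re, Complex.re_mul_ofReal, Complex.ofReal_re]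
  linarith [mul_nonneg hℓ (Real.exp_pos (γ * c / 2)).le]

theorem norm_zeroModeWeight_le_one (ha : 0 ≤ a) (hℓ : 0 ≤ ℓ.re) (c : ℝ) :
    ‖zeroModeWeight γ a ℓ c‖ ≤ 1 :=
  (norm_zeroModeWeight_le hℓ c).trans
    (Real.exp_le_one_iff.mpr (neg_nonpos.mpr (by positivity)))

theorem norm_zeroModeWeight_le_exp (ha : 0 ≤ a) (hℓ : 0 ≤ ℓ.re) (c : ℝ) :
    ‖zeroModeWeight γ a ℓ c‖ ≤ Real.exp (-(a * γ * c)) := by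
  refine (norm_zeroModeWeight_le hℓ c).trans (Real.exp_le_exp.mpr (neg_le_neg ?_))
  rw [mul_assoc]
  exact mul_le_mul_of_nonneg_left ((le_add_of_nonneg_right zero_le_one).trans
    (Real.add_one_le_exp _)) ha

theorem tendsto_zeroModeWeight_atBot (hγ : 0 < γ) :
    Tendsto (zeroModeWeight γ a ℓ) atBot (𝓝 1) := by
  have hγc : Tendsto (fun c : ℝ => γ * c) atBot atBot :=
    tendsto_id.const_mul_atBot hγ
  have hexp := (Complex.continuous_ofReal.tendsto 0).comp (Real.tendsto_exp_atBot.comp hγc)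
  have hexp_half := (Complex.continuous_ofReal.tendsto 0).comp
    (Real.tendsto_exp_atBot.comp (hγc.atBot_div_const two_pos))
  have hlim := ((hexp.const_mul (a : ℂ)).neg.sub (hexp_half.const_mul ℓ)).cexp
  simp only [Complex.ofReal_zero, mul_zero, neg_zero, sub_zero, Complex.exp_zero] at hlim
  exact hlim

end ZeroModeWeight

/-- Deterministic core of the first residue computation in Lemma 5.1 of the paper:
`s · ∫_ℝ e^{sc} exp(−a e^{γc} − ℓ e^{γc/2}) dc → 1` as `s → 0⁺`. -/
theorem zero_mode_residue_limit (γ a : ℝ) (hγ : 0 < γ) (ha : 0 < a)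
    (ℓ : ℂ) (hℓ : 0 ≤ ℓ.re) :
    Tendsto (fun s : ℝ => (s : ℂ) *
        ∫ c : ℝ, Complex.exp (s * c) *
          Complex.exp (-(a * Real.exp (γ * c)) - ℓ * Real.exp (γ * c / 2)))
      (nhdsWithin 0 (Set.Ioi 0)) (nhds 1) :=
  tendsto_mul_integral_cexp_mul continuous_zeroModeWeight
    (norm_zeroModeWeight_le_one ha.le hℓ) (mul_pos ha hγ)
    (fun c _ => by rw [one_mul]; exact norm_zeroModeWeight_le_exp ha.le hℓ c)
    (tendsto_zeroModeWeight_atBot hγ)
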